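/- arXiv:1703.01535 — 3 statements merged into one kernel-verified Lean document; each statement's English description precedes it below -/
import Mathlib

section
/- Let n ≥ 1 and let f be n-times differentiable on an open interval containing [a,b] with f^(n) absolutely continuous and essentially bounded on [a,b]. Assume that f^{(k−1)}(a) = f^{(k−1)}((a+b)/2) = f^{(k−1)}(b) = 0 for all k = 1,…,n−1. Then for every x ∈ [a,(a+b)/2], | (1/n)·(f(x)+f(a+b−x))/2 − (1/(b−a))·∫_a^b f(y) dy | ≤ (2/(n!·(b−a)·n·(n+1)))·( (x−a)^{n+1} + ((a+b)/2 − x)^{n+1} ) · ‖f^(n)‖_{L^∞[a,b]}. -/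
/-!
On each half `[p, q]` of `[a, b]`, with `w = x` on the left half and `w = a + b - x` on the
right one, integrate `f⁽ⁿ⁾` against the Peano kernel equal to `(t - w)ⁿ⁻¹ (t - p)` on `[p, w]`
and to `(t - w)ⁿ⁻¹ (t - q)` on `[w, q]`. Integrating by parts `n` times, the boundary terms
at `p` and `q` vanish (those with `f⁽ʲ⁾`, `j ≤ n - 2`, by hypothesis, those with `f⁽ⁿ⁻¹⁾` by
cancellation), and the integral becomes `± ((n - 1)! (q - p) f(w) - n! ∫_p^q f)`. The kernel
has constant sign on `[p, w]` and on `[w, q]`, so bounding `|f⁽ⁿ⁾|` by its essential supremum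
leaves two beta integrals, of total `((w - p)ⁿ⁺¹ + (q - w)ⁿ⁺¹) / (n (n + 1))`. The two halves
contribute equally.
-/

open MeasureTheory Set
open scoped Nat

/-- `g` is absolutely continuous on `[a,b]`. -/
def AbsCont (g : ℝ → ℝ) (a b : ℝ) : Prop :=
  ∃ h : ℝ → ℝ, IntervalIntegrable h MeasureTheory.volume a b ∧
    ∀ t ∈ Set.Icc a b, g t = g a + ∫ s in a..t, h s

/-- The essential supremum of `|g|` on `[a,b]` (the `L^∞[a,b]` norm). -/
noncomputable def essSupAbs (g : ℝ → ℝ) (a b : ℝ) : ℝ :=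
  essSup (fun t => |g t|) (MeasureTheory.volume.restrict (Set.Icc a b))

theorem ContDiffOn.hasDerivAt_iteratedDeriv {f : ℝ → ℝ} {s : Set ℝ} {n : WithTop ℕ∞}
    (hf : ContDiffOn ℝ n f s) (hs : IsOpen s) {j : ℕ} (hj : (j : WithTop ℕ∞) < n) {t : ℝ}
    (ht : t ∈ s) : HasDerivAt (iteratedDeriv j f) (iteratedDeriv (j + 1) f t) t := by
  have hdiff := (hf.differentiableOn_iteratedDerivWithin hj hs.uniqueDiffOn).congr
    (iteratedDerivWithin_of_isOpen hs).symm
  rw [iteratedDeriv_succ]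
  exact (hdiff.differentiableAt (hs.mem_nhds ht)).hasDerivAt

theorem ContDiffOn.continuousOn_iteratedDeriv {f : ℝ → ℝ} {s : Set ℝ} {n : WithTop ℕ∞}
    (hf : ContDiffOn ℝ n f s) (hs : IsOpen s) {j : ℕ} (hj : (j : WithTop ℕ∞) ≤ n) :
    ContinuousOn (iteratedDeriv j f) s :=
  (hf.continuousOn_iteratedDerivWithin hj hs.uniqueDiffOn).congr
    (iteratedDerivWithin_of_isOpen hs).symm

theorem integral_sub_pow_mul_sub (N : ℕ) (u v : ℝ) :
    ∫ t in u..v, (t - u) ^ N * (v - t) = (v - u) ^ (N + 2) / ((N + 1) * (N + 2)) := by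
  have hsplit : (fun t : ℝ => (t - u) ^ N * (v - t)) =
      fun t => (v - u) * (t - u) ^ N - (t - u) ^ (N + 1) := by
    ext t; ring
  rw [hsplit, intervalIntegral.integral_sub, intervalIntegral.integral_const_mul,
    intervalIntegral.integral_comp_sub_right (fun t => t ^ N),
    intervalIntegral.integral_comp_sub_right (fun t => t ^ (N + 1))]
  · simp only [integral_pow, sub_self]
    field_simp
    push_cast
    ring
  all_goals exact Continuous.intervalIntegrable (by fun_prop) _ _

theorem integral_sub_pow_mul_sub' (N : ℕ) (u v : ℝ) :
    ∫ t in u..v, (v - t) ^ N * (t - u) = (v - u) ^ (N + 2) / ((N + 1) * (N + 2)) := by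
  have h := intervalIntegral.integral_comp_sub_left (a := u) (b := v)
    (fun t => (t - u) ^ N * (v - t)) (u + v)
  simp only [add_sub_cancel_right, add_sub_cancel_left, integral_sub_pow_mul_sub] at h
  rw [← h]
  congr 1; ext t; ring

theorem abs_integral_mul_le {k g : ℝ → ℝ} {u v M : ℝ} (huv : u ≤ v) (hk : Continuous k)
    (hg : ∀ᵐ t ∂volume.restrict (Ioc u v), |g t| ≤ M) :
    |∫ t in u..v, k t * g t| ≤ (∫ t in u..v, |k t|) * M := by
  rw [← intervalIntegral.integral_mul_const]
  refine intervalIntegral.norm_integral_le_of_norm_le (f := fun t => k t * g t) huv ?_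
    ((hk.abs.mul continuous_const).intervalIntegrable (μ := volume) _ _)
  rw [← ae_restrict_iff' measurableSet_Ioc]
  filter_upwards [hg] with t ht
  rw [Real.norm_eq_abs, abs_mul]
  exact mul_le_mul_of_nonneg_left ht (abs_nonneg _)

section DerivativeChain

variable {G : ℕ → ℝ → ℝ} {p q : ℝ}

theorem integral_sub_pow_succ_mul_deriv {g g' : ℝ → ℝ} (k : ℕ) (w : ℝ)
    (hg : ∀ t ∈ uIcc p q, HasDerivAt g (g' t) t) (hg' : IntervalIntegrable g' volume p q) :
    ∫ t in p..q, (t - w) ^ (k + 1) * g' t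
      = (q - w) ^ (k + 1) * g q - (p - w) ^ (k + 1) * g p
        - (k + 1) * ∫ t in p..q, (t - w) ^ k * g t := by
  have hpow : ∀ t ∈ uIcc p q,
      HasDerivAt (fun t : ℝ => (t - w) ^ (k + 1)) ((k + 1) * (t - w) ^ k) t := fun t _ => by
    simpa using ((hasDerivAt_id t).sub_const w).fun_pow (k + 1)
  rw [intervalIntegral.integral_mul_deriv_eq_deriv_mul hpow hg
    (Continuous.intervalIntegrable (by fun_prop) _ _) hg',
    ← intervalIntegral.integral_const_mul]
  simp only [mul_assoc]

theorem integral_sub_pow_mul_eq_of_eq_zero (k : ℕ) (w : ℝ)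
    (hG : ∀ j < k, ∀ t ∈ uIcc p q, HasDerivAt (G j) (G (j + 1) t) t)
    (hGk : ContinuousOn (G k) (uIcc p q))
    (hp : ∀ j < k, G j p = 0) (hq : ∀ j < k, G j q = 0) :
    ∫ t in p..q, (t - w) ^ k * G k t = (-1) ^ k * k ! * ∫ t in p..q, G 0 t := by
  induction k with
  | zero => simp
  | succ k ih =>
    rw [integral_sub_pow_succ_mul_deriv k w (hG k k.lt_succ_self) hGk.intervalIntegrable,
      hp k k.lt_succ_self, hq k k.lt_succ_self,
      ih (fun j hj => hG j (hj.trans k.lt_succ_self))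
        (HasDerivAt.continuousOn (hG k k.lt_succ_self))
        (fun j hj => hp j (hj.trans k.lt_succ_self)) (fun j hj => hq j (hj.trans k.lt_succ_self))]
    push_cast [Nat.factorial_succ]
    ring

theorem integral_sub_pow_mul_eq_of_eq_zero_left (k : ℕ)
    (hG : ∀ j ≤ k, ∀ t ∈ uIcc p q, HasDerivAt (G j) (G (j + 1) t) t)
    (hGk : ContinuousOn (G (k + 1)) (uIcc p q)) (hp : ∀ j < k, G j p = 0) :
    ∫ t in p..q, (t - q) ^ k * G (k + 1) t = (-1) ^ k * k ! * G 0 q - (p - q) ^ k * G k p := by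
  induction k with
  | zero =>
    simp only [pow_zero, one_mul, Nat.factorial_zero, Nat.cast_one]
    exact intervalIntegral.integral_eq_sub_of_hasDerivAt (hG 0 le_rfl) hGk.intervalIntegrable
  | succ k ih =>
    rw [integral_sub_pow_succ_mul_deriv k q (hG (k + 1) le_rfl) hGk.intervalIntegrable,
      ih (fun j hj => hG j (hj.trans k.le_succ))
        (HasDerivAt.continuousOn (hG (k + 1) le_rfl))
        (fun j hj => hp j (hj.trans k.lt_succ_self)), hp k k.lt_succ_self]
    push_cast [Nat.factorial_succ]
    ring

variable {w : ℝ}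

theorem two_point_peano_identity (N : ℕ)
    (hG : ∀ j ≤ N, ∀ t ∈ Icc p q, HasDerivAt (G j) (G (j + 1) t) t)
    (hGN : ContinuousOn (G (N + 1)) (Icc p q)) (hp : ∀ j < N, G j p = 0)
    (hq : ∀ j < N, G j q = 0) (hw : w ∈ Icc p q) :
    (∫ t in p..w, (t - w) ^ N * (t - p) * G (N + 1) t)
      + ∫ t in w..q, (t - w) ^ N * (t - q) * G (N + 1) t
      = (-1) ^ N * (N ! * (q - p) * G 0 w - (N + 1) ! * ∫ t in p..q, G 0 t) := by
  have hpI : p ∈ Icc p q := left_mem_Icc.2 (hw.1.trans hw.2)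
  have hqI : q ∈ Icc p q := right_mem_Icc.2 (hw.1.trans hw.2)
  have hint : ∀ {u v : ℝ}, u ∈ Icc p q → v ∈ Icc p q → ∀ k : ℕ,
      IntervalIntegrable (fun t => (t - w) ^ k * G (N + 1) t) volume u v := fun hu hv k =>
    ((continuous_sub_right w).pow k).continuousOn.mul (hGN.mono (uIcc_subset_Icc hu hv))
      |>.intervalIntegrable
  have hsplit : ∀ {u v : ℝ}, u ∈ Icc p q → v ∈ Icc p q → ∀ z : ℝ,
      ∫ t in u..v, (t - w) ^ N * (t - z) * G (N + 1) t
        = (∫ t in u..v, (t - w) ^ (N + 1) * G (N + 1) t)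
          + (w - z) * ∫ t in u..v, (t - w) ^ N * G (N + 1) t := fun hu hv z => by
    rw [← intervalIntegral.integral_const_mul, ← intervalIntegral.integral_add (hint hu hv _)
      ((hint hu hv _).const_mul _)]
    congr 1; ext t; ring
  have hder : ∀ {u v : ℝ}, u ∈ Icc p q → v ∈ Icc p q → ∀ j ≤ N,
      ∀ t ∈ uIcc u v, HasDerivAt (G j) (G (j + 1) t) t := fun hu hv j hj t ht =>
    hG j hj t (uIcc_subset_Icc hu hv ht)
  have hcont : ∀ {u v : ℝ}, u ∈ Icc p q → v ∈ Icc p q →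
      ContinuousOn (G (N + 1)) (uIcc u v) := fun hu hv => hGN.mono (uIcc_subset_Icc hu hv)
  have hleft := integral_sub_pow_mul_eq_of_eq_zero_left N (hder hpI hw) (hcont hpI hw) hp
  have hright := integral_sub_pow_mul_eq_of_eq_zero_left N (hder hqI hw) (hcont hqI hw) hq
  have hwhole : ∫ t in p..q, (t - w) ^ (N + 1) * G (N + 1) t
      = (q - w) ^ (N + 1) * G N q - (p - w) ^ (N + 1) * G N p
        - (N + 1) * ((-1) ^ N * N ! * ∫ t in p..q, G 0 t) := by
    rw [integral_sub_pow_succ_mul_deriv N w (hder hpI hqI N le_rfl)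
      (hcont hpI hqI).intervalIntegrable, integral_sub_pow_mul_eq_of_eq_zero N w
        (fun j hj => hder hpI hqI j hj.le) (HasDerivAt.continuousOn (hder hpI hqI N le_rfl)) hp hq]
  have hadd := intervalIntegral.integral_add_adjacent_intervals (hint hpI hw (N + 1))
    (hint hw hqI (N + 1))
  have hsymm := intervalIntegral.integral_symm (f := fun t => (t - w) ^ N * G (N + 1) t)
    (μ := volume) q w
  rw [hsplit hpI hw, hsplit hw hqI]
  push_cast [Nat.factorial_succ]
  linear_combination hadd + hwhole + (w - p) * hleft + (w - q) * hsymm - (w - q) * hright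

theorem abs_two_point_remainder_le (N : ℕ)
    (hG : ∀ j ≤ N, ∀ t ∈ Icc p q, HasDerivAt (G j) (G (j + 1) t) t)
    (hGN : ContinuousOn (G (N + 1)) (Icc p q)) (hp : ∀ j < N, G j p = 0)
    (hq : ∀ j < N, G j q = 0) (hw : w ∈ Icc p q) {M : ℝ}
    (hM : ∀ᵐ t ∂volume.restrict (Icc p q), |G (N + 1) t| ≤ M) :
    |N ! * (q - p) * G 0 w - (N + 1) ! * ∫ t in p..q, G 0 t|
      ≤ ((w - p) ^ (N + 2) + (q - w) ^ (N + 2)) / ((N + 1) * (N + 2)) * M := by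
  have hleft : |∫ t in p..w, (t - w) ^ N * (t - p) * G (N + 1) t|
      ≤ (w - p) ^ (N + 2) / ((N + 1) * (N + 2)) * M := by
    refine (abs_integral_mul_le hw.1 (by fun_prop) (ae_restrict_of_ae_restrict_of_subset
      (Ioc_subset_Icc_self.trans (Icc_subset_Icc_right hw.2)) hM)).trans_eq ?_
    rw [← integral_sub_pow_mul_sub' N p w]
    congr 1
    refine intervalIntegral.integral_congr fun t ht => ?_
    rw [uIcc_of_le hw.1] at ht
    rw [abs_mul, abs_pow, abs_sub_comm, abs_of_nonneg (sub_nonneg.2 ht.2),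
      abs_of_nonneg (sub_nonneg.2 ht.1)]
  have hright : |∫ t in w..q, (t - w) ^ N * (t - q) * G (N + 1) t|
      ≤ (q - w) ^ (N + 2) / ((N + 1) * (N + 2)) * M := by
    refine (abs_integral_mul_le hw.2 (by fun_prop) (ae_restrict_of_ae_restrict_of_subset
      (Ioc_subset_Icc_self.trans (Icc_subset_Icc_left hw.1)) hM)).trans_eq ?_
    rw [← integral_sub_pow_mul_sub N w q]
    congr 1
    refine intervalIntegral.integral_congr fun t ht => ?_
    rw [uIcc_of_le hw.2] at ht
    rw [abs_mul, abs_pow, abs_of_nonneg (sub_nonneg.2 ht.1), abs_sub_comm,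
      abs_of_nonneg (sub_nonneg.2 ht.2)]
  calc |N ! * (q - p) * G 0 w - (N + 1) ! * ∫ t in p..q, G 0 t|
      = |(∫ t in p..w, (t - w) ^ N * (t - p) * G (N + 1) t)
          + ∫ t in w..q, (t - w) ^ N * (t - q) * G (N + 1) t| := by
        rw [two_point_peano_identity N hG hGN hp hq hw, abs_mul, abs_pow, abs_neg, abs_one, one_pow,
          one_mul]
    _ ≤ _ := (abs_add_le _ _).trans (add_le_add hleft hright)
    _ = _ := by ring

theorem abs_two_point_average_sub_mean_le {n : ℕ} (hn : 1 ≤ n) {a b x M : ℝ} (hab : a < b)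
    (hG : ∀ j < n, ∀ t ∈ Icc a b, HasDerivAt (G j) (G (j + 1) t) t)
    (hGn : ContinuousOn (G n) (Icc a b))
    (hzero : ∀ j < n - 1, G j a = 0 ∧ G j ((a + b) / 2) = 0 ∧ G j b = 0)
    (hM : ∀ᵐ t ∂volume.restrict (Icc a b), |G n t| ≤ M) (hx : x ∈ Icc a ((a + b) / 2)) :
    |1 / (n : ℝ) * ((G 0 x + G 0 (a + b - x)) / 2) - 1 / (b - a) * ∫ t in a..b, G 0 t|
      ≤ 2 / ((n ! : ℝ) * (b - a) * n * (n + 1))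
          * ((x - a) ^ (n + 1) + ((a + b) / 2 - x) ^ (n + 1)) * M := by
  obtain ⟨N, rfl⟩ : ∃ N, n = N + 1 := ⟨n - 1, by omega⟩
  have ham : a ≤ (a + b) / 2 := by linarith
  have hmb : (a + b) / 2 ≤ b := by linarith
  have hleft := abs_two_point_remainder_le N
    (fun j hj t ht => hG j (Nat.lt_succ_of_le hj) t (Icc_subset_Icc_right hmb ht))
    (hGn.mono (Icc_subset_Icc_right hmb)) (fun j hj => (hzero j hj).1)
    (fun j hj => (hzero j hj).2.1) hx
    (ae_restrict_of_ae_restrict_of_subset (Icc_subset_Icc_right hmb) hM)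
  have hright := abs_two_point_remainder_le N
    (fun j hj t ht => hG j (Nat.lt_succ_of_le hj) t (Icc_subset_Icc_left ham ht))
    (hGn.mono (Icc_subset_Icc_left ham)) (fun j hj => (hzero j hj).2.1)
    (fun j hj => (hzero j hj).2.2) (w := a + b - x) ⟨by linarith [hx.2], by linarith [hx.1]⟩
    (ae_restrict_of_ae_restrict_of_subset (Icc_subset_Icc_left ham) hM)
  rw [show a + b - x - (a + b) / 2 = (a + b) / 2 - x by ring,
    show b - (a + b - x) = x - a by ring] at hright
  have hG0 : ContinuousOn (G 0) (Icc a b) :=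
    HasDerivAt.continuousOn (hG 0 (Nat.succ_pos N))
  rw [← intervalIntegral.integral_add_adjacent_intervals
    (hG0.mono (uIcc_subset_Icc (left_mem_Icc.2 hab.le) ⟨ham, hmb⟩)).intervalIntegrable
    (hG0.mono (uIcc_subset_Icc ⟨ham, hmb⟩ (right_mem_Icc.2 hab.le))).intervalIntegrable]
  have hba : 0 < b - a := sub_pos.2 hab
  have hden : 0 < ((N + 1)! : ℝ) * (b - a) := by positivity
  have hquot : 1 / ((N + 1 : ℕ) : ℝ) * ((G 0 x + G 0 (a + b - x)) / 2)
      - 1 / (b - a) * ((∫ t in a..(a + b) / 2, G 0 t) + ∫ t in (a + b) / 2..b, G 0 t)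
      = ((N ! * ((a + b) / 2 - a) * G 0 x - (N + 1)! * ∫ t in a..(a + b) / 2, G 0 t)
          + (N ! * (b - (a + b) / 2) * G 0 (a + b - x)
            - (N + 1)! * ∫ t in (a + b) / 2..b, G 0 t))
          / ((N + 1)! * (b - a)) := by
    field_simp
    push_cast [Nat.factorial_succ]
    ring
  rw [hquot, abs_div, abs_of_pos hden, div_le_iff₀ hden]
  refine ((abs_add_le _ _).trans (add_le_add hleft hright)).trans_eq ?_
  field_simp
  push_cast [Nat.factorial_succ]
  ring

end DerivativeChain

theorem ae_abs_le_essSupAbs {g : ℝ → ℝ} {a b : ℝ}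
    (hg : ∃ C : ℝ, ∀ᵐ t ∂volume.restrict (Icc a b), |g t| ≤ C) :
    ∀ᵐ t ∂volume.restrict (Icc a b), |g t| ≤ essSupAbs g a b := by
  obtain ⟨C, hC⟩ := hg
  exact ae_le_essSup ⟨C, hC⟩

theorem stmt_4_general (n : ℕ) (hn : 1 ≤ n) (a b c d : ℝ) (hab : a < b)
    (hca : c < a) (hbd : b < d) (f : ℝ → ℝ)
    (hf : ContDiffOn ℝ (n : ℕ∞) f (Set.Ioo c d))
    (hbdd : ∃ C : ℝ, ∀ᵐ t ∂(MeasureTheory.volume.restrict (Set.Icc a b)),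
      |iteratedDeriv n f t| ≤ C)
    (hvanish : ∀ k, 1 ≤ k → k ≤ n - 1 →
      iteratedDeriv (k - 1) f a = 0 ∧ iteratedDeriv (k - 1) f ((a + b) / 2) = 0 ∧
        iteratedDeriv (k - 1) f b = 0)
    (x : ℝ) (hx : x ∈ Set.Icc a ((a + b) / 2)) :
    |(1 / (n : ℝ)) * ((f x + f (a + b - x)) / 2)
        - (1 / (b - a)) * ∫ y in a..b, f y|
      ≤ (2 / ((n.factorial : ℝ) * (b - a) * n * (n + 1))) *
          ((x - a) ^ (n + 1) + ((a + b) / 2 - x) ^ (n + 1)) *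
          essSupAbs (iteratedDeriv n f) a b := by
  have hsub : Icc a b ⊆ Ioo c d := Icc_subset_Ioo hca hbd
  simpa only [iteratedDeriv_zero] using abs_two_point_average_sub_mean_le
    (G := fun j => iteratedDeriv j f) hn hab
    (fun j hj t ht => hf.hasDerivAt_iteratedDeriv isOpen_Ioo (by exact_mod_cast hj) (hsub ht))
    ((hf.continuousOn_iteratedDeriv isOpen_Ioo le_rfl).mono hsub)
    (fun j hj => by simpa using hvanish (j + 1) (by omega) (by omega))
    (ae_abs_le_essSupAbs hbdd) hx

theorem stmt_4 (n : ℕ) (hn : 1 ≤ n) (a b c d : ℝ) (hab : a < b)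
    (hca : c < a) (hbd : b < d) (f : ℝ → ℝ)
    (hf : ContDiffOn ℝ (n : ℕ∞) f (Set.Ioo c d))
    (hAC : AbsCont (iteratedDeriv n f) a b)
    (hbdd : ∃ C : ℝ, ∀ᵐ t ∂(MeasureTheory.volume.restrict (Set.Icc a b)),
      |iteratedDeriv n f t| ≤ C)
    (hvanish : ∀ k, 1 ≤ k → k ≤ n - 1 →
      iteratedDeriv (k - 1) f a = 0 ∧ iteratedDeriv (k - 1) f ((a + b) / 2) = 0 ∧
        iteratedDeriv (k - 1) f b = 0)
    (x : ℝ) (hx : x ∈ Set.Icc a ((a + b) / 2)) :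
    |(1 / (n : ℝ)) * ((f x + f (a + b - x)) / 2)
        - (1 / (b - a)) * ∫ y in a..b, f y|
      ≤ (2 / ((n.factorial : ℝ) * (b - a) * n * (n + 1))) *
          ((x - a) ^ (n + 1) + ((a + b) / 2 - x) ^ (n + 1)) *
          essSupAbs (iteratedDeriv n f) a b :=
  stmt_4_general n hn a b c d hab hca hbd f hf hbdd hvanish x hx
end

section
/- Let n ≥ 1, let (P_k)_{k≥0} be a harmonic sequence of polynomials, and let f be n-times differentiable on an open interval containing [a,b] with f^(n) absolutely continuous on [a,b]. Then for every x ∈ [a,(a+b)/2], (1/n)·( (f(x)+f(a+b−x))/2 + Σ_{k=1}^{n−1} ( T_k(x) + F̃_k(a,b) ) ) − (1/(b−a))·∫_a^b f(y) dy = ((−1)^{n−1}/((b−a)·n))·∫_a^b P_{n−1}(t)·S(t,x)·f^(n)(t) dt. -/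
open MeasureTheory Set

/-- The Guessab–Schmeisser / Fink-type kernel `S(t,x)` on `[a,b]`. -/
noncomputable def Skernel (a b x t : ℝ) : ℝ :=
  if t ≤ x then t - a else if t < a + b - x then t - (a + b) / 2 else t - b

/-- A harmonic sequence of polynomials: `P 0 = 1` and `(P (k+1))' = P k`. -/
def HarmonicSeq (P : ℕ → Polynomial ℝ) : Prop :=
  P 0 = 1 ∧ ∀ k, (P (k + 1)).derivative = P k

/-- The term `T_k(x)` of the harmonic-sequence expansion. -/
noncomputable def Tterm (P : ℕ → Polynomial ℝ) (f : ℝ → ℝ) (a b x : ℝ) (k : ℕ) : ℝ :=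
  ((-1 : ℝ) ^ k / 2) *
    ((P k).eval x * iteratedDeriv k f x +
      (P k).eval (a + b - x) * iteratedDeriv k f (a + b - x))

/-- The term `F̃_k(a,b)` of the harmonic-sequence expansion. -/
noncomputable def Ftilde (P : ℕ → Polynomial ℝ) (f : ℝ → ℝ) (n : ℕ) (a b : ℝ) (k : ℕ) : ℝ :=
  ((-1 : ℝ) ^ k * ((n : ℝ) - k) / (b - a)) *
    ((P k).eval a * iteratedDeriv (k - 1) f a - (P k).eval b * iteratedDeriv (k - 1) f b)

/-!
On each of the three intervals where `S(·, x)` is affine, `(t - c) P_{n-1}(t)` is a polynomial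
whose `j`-th derivative is `(t - c) P_{n-1-j}(t) + j P_{n-j}(t)` by harmonicity, and whose
`n`-th derivative is the constant `n`. Integrating by parts `n` times therefore evaluates each
piece through the boundary values of `E(t) = ∑ (-1)^k P_k(t) f^{(k)}(t)` (`harmonicSum`) and
`G(t) = ∑ (-1)^k (n-1-k) P_{k+1}(t) f^{(k)}(t)` (`harmonicWeightedSum`), up to `(-1)^n n ∫ f`.
When the pieces are added, the two jumps of the kernel, both of height `(b-a)/2`, leave
`(b-a)/2 (E(x) + E(a+b-x))`, which gives the terms `T_k`, and the endpoints leave `G(b) - G(a)`,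
which gives the terms `F̃_k`.
-/

section IteratedDeriv

variable {𝕜 F : Type*} [NontriviallyNormedField 𝕜] [NormedAddCommGroup F] [NormedSpace 𝕜 F]
  {f : 𝕜 → F} {s : Set 𝕜} {n : WithTop ℕ∞} {m : ℕ}

theorem ContDiffOn.continuousOn_iteratedDeriv_of_isOpen (hf : ContDiffOn 𝕜 n f s)
    (hs : IsOpen s) (hm : (m : WithTop ℕ∞) ≤ n) : ContinuousOn (iteratedDeriv m f) s :=
  (hf.continuousOn_iteratedDerivWithin hm hs.uniqueDiffOn).congr
    (iteratedDerivWithin_of_isOpen hs).symm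

theorem ContDiffOn.hasDerivAt_iteratedDeriv_of_isOpen (hf : ContDiffOn 𝕜 n f s)
    (hs : IsOpen s) (hm : (m : WithTop ℕ∞) < n) {t : 𝕜} (ht : t ∈ s) :
    HasDerivAt (iteratedDeriv m f) (iteratedDeriv (m + 1) f t) t := by
  have hdiff := (hf.differentiableOn_iteratedDerivWithin hm hs.uniqueDiffOn).differentiableAt
    (hs.mem_nhds ht)
  have heq := Filter.eventuallyEq_of_mem (hs.mem_nhds ht)
    (iteratedDerivWithin_of_isOpen (n := m) (f := f) hs)
  rw [iteratedDeriv_succ]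
  exact (hdiff.congr_of_eventuallyEq heq.symm).hasDerivAt

end IteratedDeriv

theorem neg_one_pow_sub_of_le {R : Type*} [Monoid R] [HasDistribNeg R] {m k : ℕ} (h : k ≤ m) :
    (-1 : R) ^ (m - k) = (-1) ^ m * (-1) ^ k := by
  obtain ⟨i, rfl⟩ := Nat.exists_eq_add_of_le h
  rw [Nat.add_sub_cancel_left, ← pow_add, add_right_comm, ← two_mul, pow_add, pow_mul,
    neg_one_sq, one_pow, one_mul]

open Polynomial

theorem integral_eval_mul_iteratedDeriv {f : ℝ → ℝ} {s : Set ℝ} {m : ℕ}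
    (hf : ContDiffOn ℝ (m : ℕ∞) f s) (hs : IsOpen s) {u v : ℝ} (huv : uIcc u v ⊆ s)
    (q : ℝ[X]) :
    ∫ t in u..v, q.eval t * iteratedDeriv m f t =
      ∑ j ∈ Finset.range m, (-1) ^ j *
          ((derivative^[j] q).eval v * iteratedDeriv (m - (j + 1)) f v
            - (derivative^[j] q).eval u * iteratedDeriv (m - (j + 1)) f u)
        + (-1) ^ m * ∫ t in u..v, (derivative^[m] q).eval t * f t := by
  induction m generalizing q with
  | zero => simp
  | succ m ih =>
    have hcont : ∀ k ≤ m + 1, ContinuousOn (iteratedDeriv k f) (uIcc u v) := fun k hk =>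
      (hf.continuousOn_iteratedDeriv_of_isOpen hs (by exact_mod_cast hk)).mono huv
    have hparts : ∫ t in u..v, q.eval t * iteratedDeriv (m + 1) f t
        = q.eval v * iteratedDeriv m f v - q.eval u * iteratedDeriv m f u
          - ∫ t in u..v, (derivative q).eval t * iteratedDeriv m f t :=
      intervalIntegral.integral_mul_deriv_eq_deriv_mul_of_hasDerivAt q.continuousOn
        (hcont m m.le_succ) (fun t _ => q.hasDerivAt t)
        (fun t ht => hf.hasDerivAt_iteratedDeriv_of_isOpen hs (by exact_mod_cast m.lt_succ_self)
          (huv (Ioo_subset_Icc_self ht)))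
        (derivative q).continuousOn.intervalIntegrable (hcont (m + 1) le_rfl).intervalIntegrable
    rw [hparts, ih (hf.of_le (by exact_mod_cast m.le_succ)) (derivative q),
      Finset.sum_range_succ']
    simp only [Function.iterate_succ_apply, Function.iterate_zero_apply, pow_zero, one_mul,
      Nat.add_sub_add_right, zero_add, Nat.add_sub_cancel, pow_succ, mul_neg_one, neg_mul,
      Finset.sum_neg_distrib]
    ring

theorem HarmonicSeq.iterate_derivative_X_sub_C_mul {P : ℕ → ℝ[X]} (hP : HarmonicSeq P)
    (c : ℝ) (j k : ℕ) :
    derivative^[j] ((X - C c) * P (k + j)) = (X - C c) * P k + C (j : ℝ) * P (k + 1) := by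
  induction j generalizing k with
  | zero => simp
  | succ j ih =>
    rw [← add_assoc, Function.iterate_succ_apply', add_right_comm, ih (k + 1)]
    simp only [derivative_add, derivative_mul, derivative_X_sub_C, derivative_C, hP.2]
    push_cast
    simp only [C_add, C_1]
    ring

theorem HarmonicSeq.iterate_derivative_X_sub_C_mul_self {P : ℕ → ℝ[X]} (hP : HarmonicSeq P)
    (c : ℝ) (k : ℕ) : derivative^[k + 1] ((X - C c) * P k) = C ((k : ℝ) + 1) := by
  have h := hP.iterate_derivative_X_sub_C_mul c k 0
  rw [zero_add] at h
  rw [Function.iterate_succ_apply', h]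
  simp only [derivative_add, derivative_mul, derivative_X_sub_C, derivative_C, hP.2, hP.1]
  simp [C_add, C_1]
  ring

section HarmonicSums

variable (P : ℕ → ℝ[X]) (f : ℝ → ℝ) (n : ℕ)

noncomputable def harmonicSum (t : ℝ) : ℝ :=
  ∑ k ∈ Finset.range n, (-1) ^ k * ((P k).eval t * iteratedDeriv k f t)

noncomputable def harmonicWeightedSum (t : ℝ) : ℝ :=
  ∑ k ∈ Finset.range n,
    (-1) ^ k * (((n : ℝ) - 1 - k) * ((P (k + 1)).eval t * iteratedDeriv k f t))

variable {P f n}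

theorem HarmonicSeq.sum_iterate_derivative_X_sub_C_mul_eval (hP : HarmonicSeq P) (c t : ℝ) :
    ∑ j ∈ Finset.range n, (-1) ^ j *
        ((derivative^[j] ((X - C c) * P (n - 1))).eval t * iteratedDeriv (n - (j + 1)) f t) =
      (-1) ^ (n - 1) * ((t - c) * harmonicSum P f n t + harmonicWeightedSum P f n t) := by
  rw [← Finset.sum_range_reflect, harmonicSum, harmonicWeightedSum, Finset.mul_sum,
    ← Finset.sum_add_distrib, Finset.mul_sum]
  refine Finset.sum_congr rfl fun k hk => ?_
  have hk : k < n := Finset.mem_range.mp hk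
  have hP' := hP.iterate_derivative_X_sub_C_mul c (n - 1 - k) k
  rw [show k + (n - 1 - k) = n - 1 by omega] at hP'
  rw [hP', show n - (n - 1 - k + 1) = k by omega, neg_one_pow_sub_of_le (by omega : k ≤ n - 1),
    Nat.cast_sub (by omega : k ≤ n - 1), Nat.cast_sub (by omega : 1 ≤ n)]
  simp only [eval_add, eval_mul, eval_sub, eval_X, eval_C, Nat.cast_one]
  ring

theorem HarmonicSeq.integral_sub_mul_eval_mul_iteratedDeriv (hP : HarmonicSeq P) (hn : 1 ≤ n)
    {s : Set ℝ} (hf : ContDiffOn ℝ (n : ℕ∞) f s) (hs : IsOpen s) {u v : ℝ}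
    (huv : uIcc u v ⊆ s) (c : ℝ) :
    ∫ t in u..v, (t - c) * ((P (n - 1)).eval t * iteratedDeriv n f t) =
      (-1) ^ (n - 1) * ((v - c) * harmonicSum P f n v + harmonicWeightedSum P f n v
        - ((u - c) * harmonicSum P f n u + harmonicWeightedSum P f n u))
      + (-1) ^ n * n * ∫ t in u..v, f t := by
  have hq : ∀ t, (t - c) * ((P (n - 1)).eval t * iteratedDeriv n f t) =
      ((X - C c) * P (n - 1)).eval t * iteratedDeriv n f t := fun t => by
    simp only [eval_mul, eval_sub, eval_X, eval_C]; ring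
  obtain ⟨m, rfl⟩ : ∃ m, n = m + 1 := ⟨n - 1, by omega⟩
  simp_rw [hq, integral_eval_mul_iteratedDeriv hf hs huv, mul_sub, Finset.sum_sub_distrib,
    hP.sum_iterate_derivative_X_sub_C_mul_eval]
  rw [Nat.add_sub_cancel, hP.iterate_derivative_X_sub_C_mul_self]
  simp only [eval_C, intervalIntegral.integral_const_mul]
  push_cast
  ring

theorem HarmonicSeq.harmonicSum_add_harmonicSum_reflect (hP : HarmonicSeq P) (hn : 1 ≤ n)
    (a b x : ℝ) :
    (harmonicSum P f n x + harmonicSum P f n (a + b - x)) / 2 =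
      (f x + f (a + b - x)) / 2 + ∑ k ∈ Finset.Icc 1 (n - 1), Tterm P f a b x k := by
  have hrange : Finset.range n = insert 0 (Finset.Icc 1 (n - 1)) := by
    ext k; simp only [Finset.mem_range, Finset.mem_insert, Finset.mem_Icc]; omega
  have hT : ∀ k, Tterm P f a b x k = ((-1) ^ k * ((P k).eval x * iteratedDeriv k f x)
      + (-1) ^ k * ((P k).eval (a + b - x) * iteratedDeriv k f (a + b - x))) / 2 := fun k => by
    rw [Tterm]; ring
  rw [harmonicSum, harmonicSum, hrange, Finset.sum_insert (by simp), Finset.sum_insert (by simp)]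
  simp only [hT, ← Finset.sum_div, Finset.sum_add_distrib, hP.1, eval_one, iteratedDeriv_zero,
    pow_zero, one_mul]
  ring

variable (P f n)

theorem harmonicWeightedSum_sub_harmonicWeightedSum {a b : ℝ} (hab : a ≠ b) :
    harmonicWeightedSum P f n b - harmonicWeightedSum P f n a =
      (b - a) * ∑ k ∈ Finset.Icc 1 (n - 1), Ftilde P f n a b k := by
  rcases n with _ | m
  · simp [harmonicWeightedSum]
  have hba : b - a ≠ 0 := sub_ne_zero.mpr hab.symm
  rw [harmonicWeightedSum, harmonicWeightedSum, ← Finset.sum_sub_distrib, Finset.sum_range_succ,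
    Nat.add_sub_cancel, ← Finset.Ico_add_one_right_eq_Icc, Finset.sum_Ico_eq_sum_range,
    Nat.add_sub_cancel, Finset.mul_sum]
  rw [show ((m + 1 : ℕ) : ℝ) - 1 - m = 0 by push_cast; ring, zero_mul, zero_mul, mul_zero,
    sub_self, add_zero]
  refine Finset.sum_congr rfl fun k _ => ?_
  rw [Ftilde, add_comm 1 k, Nat.add_sub_cancel]
  field_simp
  push_cast
  ring

end HarmonicSums

theorem integral_Skernel_mul {a b x : ℝ} {g : ℝ → ℝ} (hax : a ≤ x) (hxm : x ≤ (a + b) / 2)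
    (hg : IntervalIntegrable g volume a b) :
    ∫ t in a..b, Skernel a b x t * g t =
      (∫ t in a..x, (t - a) * g t) + (∫ t in x..a + b - x, (t - (a + b) / 2) * g t)
        + ∫ t in a + b - x..b, (t - b) * g t := by
  have hab : a ≤ b := by linarith
  have piece : ∀ u v c, a ≤ u → u ≤ v → v ≤ b → EqOn (Skernel a b x) (· - c) (Ioo u v) →
      IntervalIntegrable (fun t => Skernel a b x t * g t) volume u v ∧
        ∫ t in u..v, Skernel a b x t * g t = ∫ t in u..v, (t - c) * g t := by
    intro u v c hau huv hvb hS
    have hEq : EqOn (fun t => (t - c) * g t) (fun t => Skernel a b x t * g t) (Ioo u v) :=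
      fun t ht => by simp only [hS ht]
    have hint : IntervalIntegrable (fun t => (t - c) * g t) volume u v :=
      (hg.mono_set (by rw [uIcc_of_le huv, uIcc_of_le hab]; exact Icc_subset_Icc hau hvb))
        |>.continuousOn_mul (continuousOn_id.sub continuousOn_const)
    exact ⟨hint.congr_uIoo (uIoo_of_le huv ▸ hEq),
      (intervalIntegral.integral_congr_Ioo_of_le huv hEq).symm⟩
  obtain ⟨h₁, e₁⟩ := piece a x a le_rfl hax (by linarith) fun t ht => if_pos ht.2.le
  obtain ⟨h₂, e₂⟩ := piece x (a + b - x) ((a + b) / 2) hax (by linarith) (by linarith)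
    fun t ht => by simp only [Skernel, if_neg (not_le.mpr ht.1), if_pos ht.2]
  obtain ⟨h₃, e₃⟩ := piece (a + b - x) b b (by linarith) (by linarith) le_rfl
    fun t ht => by
      have hxt : x < t := by linarith [ht.1]
      simp only [Skernel, if_neg (not_le.mpr hxt), if_neg (not_lt.mpr ht.1.le)]
  rw [← intervalIntegral.integral_add_adjacent_intervals (h₁.trans h₂) h₃,
    ← intervalIntegral.integral_add_adjacent_intervals h₁ h₂, e₁, e₂, e₃]

theorem stmt_11_general (n : ℕ) (hn : 1 ≤ n) (P : ℕ → Polynomial ℝ) (hP : HarmonicSeq P)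
    (a b c d : ℝ) (hab : a < b) (hca : c < a) (hbd : b < d) (f : ℝ → ℝ)
    (hf : ContDiffOn ℝ (n : ℕ∞) f (Set.Ioo c d))
    (x : ℝ) (hx : x ∈ Set.Icc a ((a + b) / 2)) :
    (1 / (n : ℝ)) *
        ((f x + f (a + b - x)) / 2 +
          ∑ k ∈ Finset.Icc 1 (n - 1), (Tterm P f a b x k + Ftilde P f n a b k))
      - (1 / (b - a)) * ∫ y in a..b, f y
    = ((-1 : ℝ) ^ (n - 1) / ((b - a) * n)) *
        ∫ t in a..b, (P (n - 1)).eval t * Skernel a b x t * iteratedDeriv n f t := by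
  obtain ⟨hax, hxm⟩ := hx
  have hsub : ∀ u v, a ≤ u → u ≤ v → v ≤ b → uIcc u v ⊆ Ioo c d := fun u v hau huv hvb =>
    (uIcc_of_le huv ▸ Icc_subset_Icc hau hvb).trans fun t ht =>
      ⟨hca.trans_le ht.1, ht.2.trans_lt hbd⟩
  have hpiece := fun u v hau huv hvb =>
    hP.integral_sub_mul_eval_mul_iteratedDeriv hn hf isOpen_Ioo (hsub u v hau huv hvb)
  have hfint : ∀ u v, a ≤ u → u ≤ v → v ≤ b → IntervalIntegrable f volume u v :=
    fun u v hau huv hvb => (hf.continuousOn.mono (hsub u v hau huv hvb)).intervalIntegrable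
  have hint : IntervalIntegrable (fun t => (P (n - 1)).eval t * iteratedDeriv n f t) volume a b :=
    ((P (n - 1)).continuousOn.mul (hf.continuousOn_iteratedDeriv_of_isOpen isOpen_Ioo le_rfl)
      |>.mono (hsub a b le_rfl hab.le le_rfl)).intervalIntegrable
  have hkernel : ∫ t in a..b, (P (n - 1)).eval t * Skernel a b x t * iteratedDeriv n f t =
      (-1) ^ (n - 1) * ((b - a) * ((harmonicSum P f n x + harmonicSum P f n (a + b - x)) / 2)
        + (harmonicWeightedSum P f n b - harmonicWeightedSum P f n a))
      + (-1) ^ n * n * ∫ t in a..b, f t := by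
    have hreorder : ∀ t, (P (n - 1)).eval t * Skernel a b x t * iteratedDeriv n f t =
        Skernel a b x t * ((P (n - 1)).eval t * iteratedDeriv n f t) := fun t => by ring
    simp_rw [hreorder]
    rw [integral_Skernel_mul hax hxm hint, hpiece a x le_rfl hax (by linarith),
      hpiece x (a + b - x) hax (by linarith) (by linarith),
      hpiece (a + b - x) b (by linarith) (by linarith) le_rfl,
      ← intervalIntegral.integral_add_adjacent_intervals
        (hfint a (a + b - x) le_rfl (by linarith) (by linarith))
        (hfint (a + b - x) b (by linarith) (by linarith) le_rfl),
      ← intervalIntegral.integral_add_adjacent_intervals (hfint a x le_rfl hax (by linarith))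
        (hfint x (a + b - x) hax (by linarith) (by linarith))]
    ring
  have hsign : (-1 : ℝ) ^ n = -(-1) ^ (n - 1) := by
    conv_lhs => rw [← Nat.sub_add_cancel hn]
    rw [pow_succ, mul_neg_one]
  have hsq : ((-1 : ℝ) ^ (n - 1)) ^ 2 = 1 := by
    rw [← pow_mul, mul_comm, pow_mul, neg_one_sq, one_pow]
  have hba : b - a ≠ 0 := sub_ne_zero.mpr hab.ne'
  rw [hkernel, harmonicWeightedSum_sub_harmonicWeightedSum P f n hab.ne,
    hP.harmonicSum_add_harmonicSum_reflect hn, Finset.sum_add_distrib, hsign]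
  field_simp
  rw [hsq]
  ring

theorem stmt_11 (n : ℕ) (hn : 1 ≤ n) (P : ℕ → Polynomial ℝ) (hP : HarmonicSeq P)
    (a b c d : ℝ) (hab : a < b) (hca : c < a) (hbd : b < d) (f : ℝ → ℝ)
    (hf : ContDiffOn ℝ (n : ℕ∞) f (Set.Ioo c d))
    (hAC : AbsCont (iteratedDeriv n f) a b)
    (x : ℝ) (hx : x ∈ Set.Icc a ((a + b) / 2)) :
    (1 / (n : ℝ)) *
        ((f x + f (a + b - x)) / 2 +
          ∑ k ∈ Finset.Icc 1 (n - 1), (Tterm P f a b x k + Ftilde P f n a b k))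
      - (1 / (b - a)) * ∫ y in a..b, f y
    = ((-1 : ℝ) ^ (n - 1) / ((b - a) * n)) *
        ∫ t in a..b, (P (n - 1)).eval t * Skernel a b x t * iteratedDeriv n f t :=
  stmt_11_general n hn P hP a b c d hab hca hbd f hf x hx
end

section
/- Let n ≥ 2, let (P_k)_{k≥0} be a harmonic sequence of polynomials, and let f be (n+1)-times differentiable on an open interval containing [a,b] with f^(n+1) absolutely continuous on [a,b]. Suppose m₁ ≤ f^(n)(t) ≤ M₁ for all t ∈ [a,b], and set M₂ = max_{t∈[a,b]} P_{n−1}(t)·S(t,x) and m₂ = min_{t∈[a,b]} P_{n−1}(t)·S(t,x). Then for every x ∈ [a,(a+b)/2], |L(f,P_n,x)| ≤ (1/(4n))·(M₁ − m₁)·(M₂ − m₂). -/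
open MeasureTheory Set

/-- The functional `ℒ(f, P_n, x)` of the Chebyshev–Grüss section. -/
noncomputable def Lfun (P : ℕ → Polynomial ℝ) (f : ℝ → ℝ) (n : ℕ) (a b x : ℝ) : ℝ :=
  ((-1 : ℝ) ^ (n - 1) / ((n : ℝ) * (b - a))) *
      (∫ t in a..b, (P (n - 1)).eval t * Skernel a b x t * iteratedDeriv n f t)
    - (((P n).eval x + (P n).eval (a + b - x)) / 2 -
        ((P (n + 1)).eval b - (P (n + 1)).eval a) / (b - a)) *
        ((-1 : ℝ) ^ (n - 1) / n) *
        ((iteratedDeriv (n - 1) f b - iteratedDeriv (n - 1) f a) / (b - a))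

/-! The kernel integrates to `∫ P_{n-1} S(·, x) = (b - a) G`, with `G` the coefficient in the
second term of `L`, and `∫ f^(n) = f^(n-1)(b) - f^(n-1)(a)`. Hence `L(f, P_n, x)` is
`(-1)^(n-1) / (n (b - a))` times the Chebyshev functional `∫ g h - (∫ g)(∫ h) / (b - a)` of
`g = P_{n-1} S(·, x)` and `h = f^(n)`, and the Grüss inequality bounds that functional by
`(b - a)(M₁ - m₁)(M₂ - m₂) / 4`. -/

noncomputable def chebyshevFunctional (a b : ℝ) (g h : ℝ → ℝ) : ℝ :=
  (∫ t in a..b, g t * h t) - (∫ t in a..b, g t) * (∫ t in a..b, h t) / (b - a)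

section Gruss

variable {a b m M : ℝ} {g h : ℝ → ℝ}

lemma mul_abs_sub_le_of_mem_Icc {u μ : ℝ} (hu : u ∈ Icc m M) (hμ : μ ∈ Icc m M) :
    (M - m) * |u - μ| ≤ (M - u) * (μ - m) + (u - m) * (M - μ) := by
  obtain ⟨hmu, huM⟩ := hu
  obtain ⟨hmμ, hμM⟩ := hμ
  rcases le_total μ u with h | h
  · rw [abs_of_nonneg (sub_nonneg.2 h)]; nlinarith
  · rw [abs_of_nonpos (sub_nonpos.2 h)]; nlinarith

lemma average_mem_Icc (hab : a < b) (hh : IntervalIntegrable h volume a b)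
    (hmem : ∀ t ∈ Icc a b, h t ∈ Icc m M) : (∫ t in a..b, h t) / (b - a) ∈ Icc m M := by
  have hba : 0 < b - a := sub_pos.2 hab
  have hlo := intervalIntegral.integral_mono_on hab.le intervalIntegrable_const hh
    fun t ht => (hmem t ht).1
  have hhi := intervalIntegral.integral_mono_on hab.le hh intervalIntegrable_const
    fun t ht => (hmem t ht).2
  rw [intervalIntegral.integral_const, smul_eq_mul] at hlo hhi
  constructor
  · rw [le_div_iff₀ hba]; linarith
  · rw [div_le_iff₀ hba]; linarith

/-- The convexity of `u ↦ |u - μ|` bounds it by its chord over `[m, M]`; integrating the chord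
gives `2 (b - a) (M - μ) (μ - m)`, which is at most `(b - a) (M - m)² / 2`. -/
lemma integral_abs_sub_average_le (hab : a < b) (hh : IntervalIntegrable h volume a b)
    (hmem : ∀ t ∈ Icc a b, h t ∈ Icc m M) :
    ∫ t in a..b, |h t - (∫ s in a..b, h s) / (b - a)| ≤ (b - a) * (M - m) / 2 := by
  have hba : 0 < b - a := sub_pos.2 hab
  set μ := (∫ s in a..b, h s) / (b - a) with hμ
  obtain ⟨hmμ, hμM⟩ : μ ∈ Icc m M := average_mem_Icc hab hh hmem
  have hB : ∫ s in a..b, h s = μ * (b - a) := by rw [hμ]; field_simp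
  have habs : IntervalIntegrable (fun t => |h t - μ|) volume a b :=
    (hh.sub intervalIntegrable_const).abs
  have hchord : (M - m) * ∫ t in a..b, |h t - μ| ≤ 2 * (b - a) * (M - μ) * (μ - m) := by
    have hmono := intervalIntegral.integral_mono_on hab.le (habs.const_mul (M - m))
      ((hh.const_mul (M + m - 2 * μ)).add
        (intervalIntegrable_const (c := (M + m) * μ - 2 * M * m)))
      fun t ht => by
        have := mul_abs_sub_le_of_mem_Icc (hmem t ht) ⟨hmμ, hμM⟩
        linarith
    rw [intervalIntegral.integral_const_mul,
      intervalIntegral.integral_add (hh.const_mul _) intervalIntegrable_const,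
      intervalIntegral.integral_const_mul, intervalIntegral.integral_const, smul_eq_mul,
      hB] at hmono
    linarith
  rcases (sub_nonneg.2 (hmμ.trans hμM)).eq_or_lt with hMm | hMm
  · have hzero := intervalIntegral.integral_mono_on hab.le habs intervalIntegrable_const fun t ht =>
      abs_sub_le_of_le_of_le (hmem t ht).1 (hmem t ht).2 hmμ hμM
    rw [intervalIntegral.integral_const, smul_eq_mul, ← hMm] at hzero
    rw [← hMm]; linarith
  · rw [← mul_le_mul_iff_of_pos_left hMm]
    nlinarith [sq_nonneg (M + m - 2 * μ)]

lemma IntervalIntegrable.mul_of_mem_Icc (hab : a ≤ b) (hg : IntervalIntegrable g volume a b)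
    (hh : IntervalIntegrable h volume a b) (hmem : ∀ t ∈ Icc a b, g t ∈ Icc m M) :
    IntervalIntegrable (fun t => g t * h t) volume a b := by
  rw [intervalIntegrable_iff_integrableOn_Icc_of_le hab] at hg hh ⊢
  refine hh.bdd_mul hg.aestronglyMeasurable (c := max |m| |M|) ?_
  refine (ae_restrict_iff' measurableSet_Icc).2 (Filter.Eventually.of_forall fun t ht => ?_)
  exact Real.norm_eq_abs _ ▸ abs_le_max_abs_abs (hmem t ht).1 (hmem t ht).2

lemma chebyshevFunctional_eq_integral (hab : a ≠ b) (hg : IntervalIntegrable g volume a b)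
    (hh : IntervalIntegrable h volume a b)
    (hgh : IntervalIntegrable (fun t => g t * h t) volume a b) (c : ℝ) :
    chebyshevFunctional a b g h =
      ∫ t in a..b, (g t - c) * (h t - (∫ s in a..b, h s) / (b - a)) := by
  set μ := (∫ s in a..b, h s) / (b - a) with hμ
  have hba : b - a ≠ 0 := sub_ne_zero.2 hab.symm
  have hexpand : (fun t => (g t - c) * (h t - μ)) =
      fun t => g t * h t - c * h t - μ * g t + c * μ := by
    funext t; ring
  rw [hexpand, intervalIntegral.integral_add ((hgh.sub (hh.const_mul c)).sub (hg.const_mul μ))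
      intervalIntegrable_const,
    intervalIntegral.integral_sub (hgh.sub (hh.const_mul c)) (hg.const_mul μ),
    intervalIntegral.integral_sub hgh (hh.const_mul c), intervalIntegral.integral_const_mul,
    intervalIntegral.integral_const_mul, intervalIntegral.integral_const, smul_eq_mul,
    chebyshevFunctional, hμ]
  field_simp
  ring

/-- The Grüss inequality. -/
theorem abs_chebyshevFunctional_le {m' M' : ℝ} (hab : a < b)
    (hg : IntervalIntegrable g volume a b) (hh : IntervalIntegrable h volume a b)
    (hg_mem : ∀ t ∈ Icc a b, g t ∈ Icc m M) (hh_mem : ∀ t ∈ Icc a b, h t ∈ Icc m' M') :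
    |chebyshevFunctional a b g h| ≤ (b - a) * (M - m) * (M' - m') / 4 := by
  set μ := (∫ s in a..b, h s) / (b - a)
  set c := (m + M) / 2 with hc
  have hgh := hg.mul_of_mem_Icc hab.le hh hg_mem
  have hg_dev : ∀ t ∈ Icc a b, |g t - c| ≤ (M - m) / 2 := fun t ht =>
    abs_le.2 ⟨by rw [hc]; linarith [(hg_mem t ht).1], by rw [hc]; linarith [(hg_mem t ht).2]⟩
  have hMm : 0 ≤ (M - m) / 2 := (abs_nonneg _).trans (hg_dev a ⟨le_rfl, hab.le⟩)
  have hdev : IntervalIntegrable (fun t => |h t - μ|) volume a b :=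
    (hh.sub intervalIntegrable_const).abs
  rw [chebyshevFunctional_eq_integral hab.ne hg hh hgh c]
  calc |∫ t in a..b, (g t - c) * (h t - μ)|
      ≤ ∫ t in a..b, |(g t - c) * (h t - μ)| :=
        intervalIntegral.abs_integral_le_integral_abs hab.le
    _ ≤ ∫ t in a..b, (M - m) / 2 * |h t - μ| := by
        refine intervalIntegral.integral_mono_on hab.le ?_ (hdev.const_mul _) fun t ht => ?_
        · exact ((hg.sub intervalIntegrable_const).mul_of_mem_Icc hab.le
            (hh.sub intervalIntegrable_const) (m := m - c) (M := M - c)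
            fun t ht => ⟨by linarith [(hg_mem t ht).1], by linarith [(hg_mem t ht).2]⟩).abs
        · rw [abs_mul]
          exact mul_le_mul_of_nonneg_right (hg_dev t ht) (abs_nonneg _)
    _ = (M - m) / 2 * ∫ t in a..b, |h t - μ| := intervalIntegral.integral_const_mul _ _
    _ ≤ (M - m) / 2 * ((b - a) * (M' - m') / 2) :=
        mul_le_mul_of_nonneg_left (integral_abs_sub_average_le hab hh hh_mem) hMm
    _ = (b - a) * (M - m) * (M' - m') / 4 := by ring

end Gruss

section Kernel

variable {a b x t : ℝ}

lemma measurable_Skernel : Measurable (Skernel a b x) :=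
  Measurable.ite (measurableSet_le measurable_id measurable_const)
    (measurable_id.sub measurable_const)
    (Measurable.ite (measurableSet_lt measurable_id measurable_const)
      (measurable_id.sub measurable_const) (measurable_id.sub measurable_const))

lemma abs_Skernel_le (ht : t ∈ Icc a b) : |Skernel a b x t| ≤ b - a := by
  unfold Skernel
  split_ifs <;> rw [abs_le] <;> constructor <;> linarith [ht.1, ht.2]

lemma exists_abs_eval_mul_Skernel_le (p : Polynomial ℝ) :
    ∃ K, ∀ t ∈ Icc a b, |p.eval t * Skernel a b x t| ≤ K := by
  obtain ⟨C, hC⟩ := (isCompact_Icc (a := a) (b := b)).exists_bound_of_continuousOn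
    p.continuous.continuousOn
  refine ⟨C * (b - a), fun t ht => ?_⟩
  rw [abs_mul]
  exact mul_le_mul (hC t ht) (abs_Skernel_le ht) (abs_nonneg _) ((norm_nonneg _).trans (hC t ht))

lemma intervalIntegrable_eval_mul_Skernel (p : Polynomial ℝ) (hab : a ≤ b) :
    IntervalIntegrable (fun t => p.eval t * Skernel a b x t) volume a b := by
  obtain ⟨K, hK⟩ := exists_abs_eval_mul_Skernel_le (a := a) (b := b) (x := x) p
  rw [intervalIntegrable_iff_integrableOn_Icc_of_le hab]
  exact Measure.integrableOn_of_bounded (M := K) measure_Icc_lt_top.ne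
    (p.continuous.measurable.mul measurable_Skernel).aestronglyMeasurable
    ((ae_restrict_iff' measurableSet_Icc).2 (Filter.Eventually.of_forall hK))

end Kernel

namespace HarmonicSeq

variable {P : ℕ → Polynomial ℝ} {a b x : ℝ}

lemma hasDerivAt_eval_mul_sub_sub (hP : HarmonicSeq P) (k : ℕ) (c t : ℝ) :
    HasDerivAt (fun u => (P (k + 1)).eval u * (u - c) - (P (k + 2)).eval u)
      ((P k).eval t * (t - c)) t := by
  have hP1 := (P (k + 1)).hasDerivAt t
  have hP2 := (P (k + 2)).hasDerivAt t
  rw [hP.2] at hP1 hP2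
  have hF : HasDerivAt (fun u => (P (k + 1)).eval u * (u - c) - (P (k + 2)).eval u)
      ((P k).eval t * (t - c) + (P (k + 1)).eval t * 1 - (P (k + 1)).eval t) t :=
    (hP1.mul ((hasDerivAt_id t).sub_const c)).sub hP2
  convert hF using 1
  ring

lemma integral_eval_mul_sub (hP : HarmonicSeq P) (k : ℕ) (c u v : ℝ) :
    ∫ t in u..v, (P k).eval t * (t - c) =
      ((P (k + 1)).eval v * (v - c) - (P (k + 2)).eval v) -
        ((P (k + 1)).eval u * (u - c) - (P (k + 2)).eval u) :=
  intervalIntegral.integral_eq_sub_of_hasDerivAt (fun t _ => hP.hasDerivAt_eval_mul_sub_sub k c t)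
    ((by fun_prop : Continuous fun t => (P k).eval t * (t - c)).intervalIntegrable u v)


lemma integral_eval_mul_Skernel (hP : HarmonicSeq P) (k : ℕ) (hx : x ∈ Icc a ((a + b) / 2)) :
    ∫ t in a..b, (P k).eval t * Skernel a b x t =
      (b - a) / 2 * ((P (k + 1)).eval x + (P (k + 1)).eval (a + b - x)) -
        ((P (k + 2)).eval b - (P (k + 2)).eval a) := by
  obtain ⟨hax, hxm⟩ := hx
  have hxy : x ≤ a + b - x := by linarith
  have hyb : a + b - x ≤ b := by linarith
  have hint := intervalIntegrable_eval_mul_Skernel (x := x) (P k) (by linarith : a ≤ b)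
  have hsub : ∀ {u v}, u ∈ Icc a b → v ∈ Icc a b →
      IntervalIntegrable (fun t => (P k).eval t * Skernel a b x t) volume u v := fun hu hv =>
    hint.mono_set (uIcc_subset_uIcc (Icc_subset_uIcc hu) (Icc_subset_uIcc hv))
  have hx_mem : x ∈ Icc a b := ⟨hax, by linarith⟩
  have hy_mem : a + b - x ∈ Icc a b := ⟨by linarith, hyb⟩
  have ha_mem : a ∈ Icc a b := ⟨le_rfl, by linarith⟩
  have hb_mem : b ∈ Icc a b := ⟨by linarith, le_rfl⟩
  have h₁ : ∫ t in a..x, (P k).eval t * Skernel a b x t = ∫ t in a..x, (P k).eval t * (t - a) :=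
    intervalIntegral.integral_congr fun t ht => by
      rw [uIcc_of_le hax] at ht
      simp only [Skernel, if_pos ht.2]
  have h₂ : ∫ t in x..(a + b - x), (P k).eval t * Skernel a b x t =
      ∫ t in x..(a + b - x), (P k).eval t * (t - (a + b) / 2) := by
    refine intervalIntegral.integral_congr_ae ?_
    filter_upwards [compl_mem_ae_iff.2 (measure_singleton (a + b - x))] with t hty ht
    rw [uIoc_of_le hxy] at ht
    simp only [Skernel, if_neg (not_le.2 ht.1), if_pos (lt_of_le_of_ne ht.2 hty)]
  have h₃ : ∫ t in (a + b - x)..b, (P k).eval t * Skernel a b x t =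
      ∫ t in (a + b - x)..b, (P k).eval t * (t - b) := by
    refine intervalIntegral.integral_congr_ae (Filter.Eventually.of_forall fun t ht => ?_)
    rw [uIoc_of_le hyb] at ht
    simp only [Skernel, if_neg (not_le.2 (hxy.trans_lt ht.1)), if_neg (not_lt.2 ht.1.le)]
  rw [← intervalIntegral.integral_add_adjacent_intervals
      (hsub ha_mem hy_mem) (hsub hy_mem hb_mem),
    ← intervalIntegral.integral_add_adjacent_intervals (hsub ha_mem hx_mem) (hsub hx_mem hy_mem),
    h₁, h₂, h₃, hP.integral_eval_mul_sub, hP.integral_eval_mul_sub, hP.integral_eval_mul_sub]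
  ring

end HarmonicSeq

lemma ContDiffOn.hasDerivAt_iteratedDeriv_s17 {𝕜 F : Type*} [NontriviallyNormedField 𝕜]
    [NormedAddCommGroup F] [NormedSpace 𝕜 F] {f : 𝕜 → F} {s : Set 𝕜} {n : WithTop ℕ∞} {m : ℕ}
    {x : 𝕜} (hf : ContDiffOn 𝕜 n f s) (hs : IsOpen s) (hm : (m : WithTop ℕ∞) < n) (hx : x ∈ s) :
    HasDerivAt (iteratedDeriv m f) (iteratedDeriv (m + 1) f x) x := by
  have hdiff : DifferentiableOn 𝕜 (iteratedDeriv m f) s :=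
    (hf.differentiableOn_iteratedDerivWithin hm hs.uniqueDiffOn).congr fun y hy =>
      (iteratedDerivWithin_of_isOpen hs hy).symm
  rw [iteratedDeriv_succ]
  exact (hdiff.differentiableAt (hs.mem_nhds hx)).hasDerivAt

lemma Lfun_eq_chebyshevFunctional {P : ℕ → Polynomial ℝ} {f : ℝ → ℝ} {a b x : ℝ}
    (hP : HarmonicSeq P) (k : ℕ) (hab : a < b) (hx : x ∈ Icc a ((a + b) / 2))
    (hderiv : ∀ t ∈ Icc a b, HasDerivAt (iteratedDeriv k f) (iteratedDeriv (k + 1) f t) t)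
    (hint : IntervalIntegrable (iteratedDeriv (k + 1) f) volume a b) :
    Lfun P f (k + 1) a b x = (-1) ^ k / ((k + 1) * (b - a)) *
      chebyshevFunctional a b (fun t => (P k).eval t * Skernel a b x t)
        (iteratedDeriv (k + 1) f) := by
  have hFTC :
      ∫ t in a..b, iteratedDeriv (k + 1) f t = iteratedDeriv k f b - iteratedDeriv k f a :=
    intervalIntegral.integral_eq_sub_of_hasDerivAt
      (fun t ht => hderiv t (uIcc_of_le hab.le ▸ ht)) hint
  have hba : b - a ≠ 0 := sub_ne_zero.2 hab.ne'
  rw [Lfun, chebyshevFunctional, hP.integral_eval_mul_Skernel k hx, hFTC, Nat.add_sub_cancel]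
  push_cast
  field_simp

theorem stmt_17_general (n : ℕ) (hn : 2 ≤ n) (P : ℕ → Polynomial ℝ) (hP : HarmonicSeq P)
    (a b c d : ℝ) (hab : a < b) (hca : c < a) (hbd : b < d) (f : ℝ → ℝ)
    (hf : ContDiffOn ℝ ((n + 1 : ℕ) : ℕ∞) f (Set.Ioo c d))
    (m₁ M₁ : ℝ)
    (hmM : ∀ t ∈ Set.Icc a b, m₁ ≤ iteratedDeriv n f t ∧ iteratedDeriv n f t ≤ M₁)
    (x : ℝ) (hx : x ∈ Set.Icc a ((a + b) / 2))
    (m₂ M₂ : ℝ)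
    (hM₂ : M₂ = sSup ((fun t => (P (n - 1)).eval t * Skernel a b x t) '' Set.Icc a b))
    (hm₂ : m₂ = sInf ((fun t => (P (n - 1)).eval t * Skernel a b x t) '' Set.Icc a b)) :
    |Lfun P f n a b x| ≤ (1 / (4 * (n : ℝ))) * (M₁ - m₁) * (M₂ - m₂) := by
  obtain ⟨k, rfl⟩ : ∃ k, n = k + 1 := ⟨n - 1, by omega⟩
  have hba : 0 < b - a := sub_pos.2 hab
  rw [Nat.add_sub_cancel] at hM₂ hm₂
  set g := fun t => (P k).eval t * Skernel a b x t
  have hderiv : ∀ j ≤ k + 1, ∀ t ∈ Icc a b,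
      HasDerivAt (iteratedDeriv j f) (iteratedDeriv (j + 1) f t) t := fun j hj t ht =>
    hf.hasDerivAt_iteratedDeriv_s17 isOpen_Ioo (by exact_mod_cast Nat.lt_succ_of_le hj)
      ⟨hca.trans_le ht.1, ht.2.trans_lt hbd⟩
  have hcont : ContinuousOn (iteratedDeriv (k + 1) f) (Icc a b) := fun t ht =>
    (hderiv (k + 1) le_rfl t ht).continuousAt.continuousWithinAt
  obtain ⟨K, hK⟩ := exists_abs_eval_mul_Skernel_le (a := a) (b := b) (x := x) (P k)
  have hg_mem : ∀ t ∈ Icc a b, g t ∈ Icc m₂ M₂ := fun t ht => by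
    rw [hM₂, hm₂]
    exact ⟨csInf_le ⟨-K, forall_mem_image.2 fun s hs => neg_le_of_abs_le (hK s hs)⟩ ⟨t, ht, rfl⟩,
      le_csSup ⟨K, forall_mem_image.2 fun s hs => le_of_abs_le (hK s hs)⟩ ⟨t, ht, rfl⟩⟩
  have hgruss := abs_chebyshevFunctional_le hab (intervalIntegrable_eval_mul_Skernel _ hab.le)
    (hcont.intervalIntegrable_of_Icc hab.le) hg_mem hmM
  rw [Lfun_eq_chebyshevFunctional hP k hab hx (hderiv k k.le_succ)
    (hcont.intervalIntegrable_of_Icc hab.le), abs_mul, abs_div, abs_pow, abs_neg, abs_one, one_pow,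
    abs_of_pos (by positivity : (0 : ℝ) < (k + 1) * (b - a))]
  calc 1 / ((k + 1) * (b - a)) * |chebyshevFunctional a b g (iteratedDeriv (k + 1) f)|
      ≤ 1 / ((k + 1) * (b - a)) * ((b - a) * (M₂ - m₂) * (M₁ - m₁) / 4) := by gcongr
    _ = 1 / (4 * ↑(k + 1)) * (M₁ - m₁) * (M₂ - m₂) := by
      push_cast
      field_simp [hba.ne']

theorem stmt_17 (n : ℕ) (hn : 2 ≤ n) (P : ℕ → Polynomial ℝ) (hP : HarmonicSeq P)
    (a b c d : ℝ) (hab : a < b) (hca : c < a) (hbd : b < d) (f : ℝ → ℝ)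
    (hf : ContDiffOn ℝ ((n + 1 : ℕ) : ℕ∞) f (Set.Ioo c d))
    (hAC : AbsCont (iteratedDeriv (n + 1) f) a b)
    (m₁ M₁ : ℝ)
    (hmM : ∀ t ∈ Set.Icc a b, m₁ ≤ iteratedDeriv n f t ∧ iteratedDeriv n f t ≤ M₁)
    (x : ℝ) (hx : x ∈ Set.Icc a ((a + b) / 2))
    (m₂ M₂ : ℝ)
    (hM₂ : M₂ = sSup ((fun t => (P (n - 1)).eval t * Skernel a b x t) '' Set.Icc a b))
    (hm₂ : m₂ = sInf ((fun t => (P (n - 1)).eval t * Skernel a b x t) '' Set.Icc a b)) :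
    |Lfun P f n a b x| ≤ (1 / (4 * (n : ℝ))) * (M₁ - m₁) * (M₂ - m₂) :=
  stmt_17_general n hn P hP a b c d hab hca hbd f hf m₁ M₁ hmM x hx m₂ M₂ hM₂ hm₂
end
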